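/- On R^4, define P with nonzero entries P^{12} = p12 e^{x4}, P^{14} = p14 e^{x4}, P^{23} = p23, and P' with nonzero entries P'^{12} = e^{x4}(p'_{12} + a23 x3 + a24 x4 + a33 x3 x4), P'^{13} = a33 e^{x4} x3, P'^{14} = a33 e^{x4} x4, P'^{23} = a53 x3 + (a33 p23/p14) x4, with real constants and p14 ≠ 0. Then [P,P] = 0, [P',P'] = 0, and [P,P'] = 0 identically, so P and P' are compatible Poisson structures. -/

import Mathlib

open scoped BigOperators

noncomputable def pd {m : ℕ} (μ : Fin m) (f : (Fin m → ℝ) → ℝ) (x : Fin m → ℝ) : ℝ :=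
  fderiv ℝ f x (Pi.single μ 1)

/-- Poisson bracket associated to a bivector field `P`. -/
noncomputable def pbrk {m : ℕ} (P : (Fin m → ℝ) → Fin m → Fin m → ℝ)
    (f g : (Fin m → ℝ) → ℝ) (x : Fin m → ℝ) : ℝ :=
  ∑ μ, ∑ ν, P x μ ν * pd μ f x * pd ν g x

/-- Schouten bracket `[P,P]^{λμν}`. -/
noncomputable def schouten {m : ℕ} (P : (Fin m → ℝ) → Fin m → Fin m → ℝ)
    (l μ ν : Fin m) (x : Fin m → ℝ) : ℝ :=
  ∑ ρ, (P x ρ l * pd ρ (fun y => P y μ ν) x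
      + P x ρ ν * pd ρ (fun y => P y l μ) x
      + P x ρ μ * pd ρ (fun y => P y ν l) x)

/-- Mixed Schouten bracket `[P,Q]^{λμν}`. -/
noncomputable def schoutenMixed {m : ℕ} (P Q : (Fin m → ℝ) → Fin m → Fin m → ℝ)
    (l μ ν : Fin m) (x : Fin m → ℝ) : ℝ :=
  ∑ ρ, (P x ρ l * pd ρ (fun y => Q y μ ν) x + Q x ρ l * pd ρ (fun y => P y μ ν) x
      + P x ρ ν * pd ρ (fun y => Q y l μ) x + Q x ρ ν * pd ρ (fun y => P y l μ) x
      + P x ρ μ * pd ρ (fun y => Q y ν l) x + Q x ρ μ * pd ρ (fun y => P y ν l) x)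

/-- The Poisson bivector `P` on the group `A_{4,3}`. -/
noncomputable def P43 (p12 p14 p23 : ℝ) : (Fin 4 → ℝ) → Fin 4 → Fin 4 → ℝ :=
  fun x μ ν =>
    let A := p12 * Real.exp (x 3)
    let B := p14 * Real.exp (x 3)
    !![0, A, 0, B;
       -A, 0, p23, 0;
       0, -p23, 0, 0;
       -B, 0, 0, 0] μ ν

/-- The Poisson bivector `P'` on the group `A_{4,3}`. -/
noncomputable def P43' (p14 p23 p12' a23 a24 a33 a53 : ℝ) :
    (Fin 4 → ℝ) → Fin 4 → Fin 4 → ℝ :=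
  fun x μ ν =>
    let A := Real.exp (x 3) * (p12' + a23 * x 2 + a24 * x 3 + a33 * x 2 * x 3)
    let B := a33 * Real.exp (x 3) * x 2
    let C := a33 * Real.exp (x 3) * x 3
    let D := a53 * x 2 + a33 * p23 / p14 * x 3
    !![0, A, B, C;
       -A, 0, D, 0;
       -B, -D, 0, 0;
       -C, 0, 0, 0] μ ν

/-!
For skew bivectors the mixed Schouten bracket is cyclic in `λ, μ, ν` by its shape and changes
sign under `μ ↔ ν`, so it is totally antisymmetric and vanishes as soon as it vanishes on the
four triples `λ < μ < ν`; moreover `[P,P]` is half of the mixed bracket of `P` with itself.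
On these triples the brackets are computed by the product and chain rules: all entries are
polynomials in `x₃, x₄, e^{x₄}` and everything cancels. The one cancellation that is not
automatic is in `[P,P']^{123}`, between `P^{14} ∂₄ P'^{23}` and `P^{23} ∂₃ P'^{13}`; it is what
forces the coefficient `a33 p23 / p14` of `x₄` in `P'^{23}`.
-/

section PartialDerivative

variable {m : ℕ} {ρ : Fin m} {f g : (Fin m → ℝ) → ℝ} {x : Fin m → ℝ}

@[simp]
lemma pd_const (c : ℝ) : pd ρ (fun _ => c) x = 0 := by
  simp [pd]

@[simp]
lemma pd_neg : pd ρ (fun y => -f y) x = -pd ρ f x := by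
  simp [pd]

@[simp]
lemma pd_apply (i : Fin m) : pd ρ (fun y => y i) x = if i = ρ then 1 else 0 := by
  simp [pd, fderiv_apply, Pi.single_apply]

lemma pd_add (hf : DifferentiableAt ℝ f x) (hg : DifferentiableAt ℝ g x) :
    pd ρ (fun y => f y + g y) x = pd ρ f x + pd ρ g x := by
  simp [pd, fderiv_fun_add hf hg]

lemma pd_mul (hf : DifferentiableAt ℝ f x) (hg : DifferentiableAt ℝ g x) :
    pd ρ (fun y => f y * g y) x = pd ρ f x * g x + f x * pd ρ g x := by
  simp [pd, fderiv_fun_mul hf hg]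
  ring

lemma pd_exp (hf : DifferentiableAt ℝ f x) :
    pd ρ (fun y => Real.exp (f y)) x = Real.exp (f x) * pd ρ f x := by
  simp [pd, hf.hasFDerivAt.exp.fderiv]

end PartialDerivative

lemma eq_zero_of_alternating_of_lt {ι : Type*} [LinearOrder ι] {F : ι → ι → ι → ℝ}
    (hcycle : ∀ a b c, F b c a = F a b c) (hswap : ∀ a b c, F a c b = -F a b c)
    (hlt : ∀ a b c, a < b → b < c → F a b c = 0) (a b c : ι) : F a b c = 0 := by
  have diag₁ (a c : ι) : F a a c = 0 := by linarith [hcycle a a c, hswap a a c]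
  have diag₂ (a b : ι) : F a b b = 0 := by linarith [hswap a b b]
  have diag₃ (a b : ι) : F a b a = 0 := by linarith [hcycle a b a, hswap b a a]
  obtain rfl | hab := eq_or_ne a b
  · exact diag₁ a c
  obtain rfl | hbc := eq_or_ne b c
  · exact diag₂ a b
  obtain rfl | hac := eq_or_ne a c
  · exact diag₃ a b
  have := hcycle a b c
  have := hcycle c a b
  have := hswap a b c
  have := hswap b c a
  have := hswap c a b
  rcases hab.lt_or_gt with hab | hab <;> rcases hbc.lt_or_gt with hbc | hbc <;>
    rcases hac.lt_or_gt with hac | hac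
  all_goals first
    | order
    | linarith [hlt a b c hab hbc]
    | linarith [hlt a c b hac hbc]
    | linarith [hlt b a c hab hac]
    | linarith [hlt b c a hbc hac]
    | linarith [hlt c a b hac hab]
    | linarith [hlt c b a hbc hab]

lemma Fin.forall_fin_four_lt_lt {p : Fin 4 → Fin 4 → Fin 4 → Prop} :
    (∀ a b c : Fin 4, a < b → b < c → p a b c) ↔ p 0 1 2 ∧ p 0 1 3 ∧ p 0 2 3 ∧ p 1 2 3 := by
  refine ⟨fun h => ⟨h _ _ _ (by decide) (by decide), h _ _ _ (by decide) (by decide),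
    h _ _ _ (by decide) (by decide), h _ _ _ (by decide) (by decide)⟩, ?_⟩
  rintro ⟨h012, h013, h023, h123⟩ a b c hab hbc
  fin_cases a <;> fin_cases b <;> fin_cases c <;> simp_all

section Schouten

variable {m : ℕ} {P Q : (Fin m → ℝ) → Fin m → Fin m → ℝ} {l μ ν : Fin m} {x : Fin m → ℝ}

lemma schoutenMixed_self : schoutenMixed P P l μ ν x = 2 * schouten P l μ ν x := by
  rw [schouten, Finset.mul_sum]
  exact Finset.sum_congr rfl fun ρ _ => by ring

lemma schoutenMixed_cycle : schoutenMixed P Q μ ν l x = schoutenMixed P Q l μ ν x :=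
  Finset.sum_congr rfl fun ρ _ => by ring

lemma schoutenMixed_swap (hP : ∀ y a b, P y b a = -P y a b)
    (hQ : ∀ y a b, Q y b a = -Q y a b) :
    schoutenMixed P Q l ν μ x = -schoutenMixed P Q l μ ν x := by
  have skew {R : (Fin m → ℝ) → Fin m → Fin m → ℝ} (hR : ∀ y a b, R y b a = -R y a b)
      (a b : Fin m) : (fun y => R y b a) = fun y => -R y a b := funext fun y => hR y a b
  rw [schoutenMixed, schoutenMixed, ← Finset.sum_neg_distrib]
  refine Finset.sum_congr rfl fun ρ _ => ?_
  rw [skew hP μ ν, skew hQ μ ν, skew hP ν l, skew hQ ν l, skew hP l μ, skew hQ l μ]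
  simp only [pd_neg]
  ring

lemma schoutenMixed_eq_zero_of_lt (hP : ∀ y a b, P y b a = -P y a b)
    (hQ : ∀ y a b, Q y b a = -Q y a b)
    (hlt : ∀ l μ ν, l < μ → μ < ν → schoutenMixed P Q l μ ν x = 0) :
    ∀ l μ ν, schoutenMixed P Q l μ ν x = 0 :=
  eq_zero_of_alternating_of_lt (F := fun l μ ν => schoutenMixed P Q l μ ν x)
    (fun _ _ _ => schoutenMixed_cycle) (fun _ _ _ => schoutenMixed_swap hP hQ) hlt

lemma schouten_eq_zero_of_lt (hP : ∀ y a b, P y b a = -P y a b)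
    (hlt : ∀ l μ ν, l < μ → μ < ν → schouten P l μ ν x = 0) :
    ∀ l μ ν, schouten P l μ ν x = 0 := by
  intro l μ ν
  have h := schoutenMixed_eq_zero_of_lt hP hP
    (fun l μ ν hlμ hμν => by rw [schoutenMixed_self, hlt l μ ν hlμ hμν, mul_zero]) l μ ν
  rwa [schoutenMixed_self, mul_eq_zero, or_iff_right two_ne_zero] at h

end Schouten

section A43

variable {p12 p14 p23 p12' a23 a24 a33 a53 : ℝ}

lemma P43_skew : ∀ y a b, P43 p12 p14 p23 y b a = -P43 p12 p14 p23 y a b := by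
  intro y a b
  fin_cases a <;> fin_cases b <;> simp [P43]

lemma P43'_skew :
    ∀ y a b,
      P43' p14 p23 p12' a23 a24 a33 a53 y b a = -P43' p14 p23 p12' a23 a24 a33 a53 y a b := by
  intro y a b
  fin_cases a <;> fin_cases b <;> simp [P43']

lemma schouten_P43_of_lt (x : Fin 4 → ℝ) :
    ∀ l μ ν, l < μ → μ < ν → schouten (P43 p12 p14 p23) l μ ν x = 0 := by
  rw [Fin.forall_fin_four_lt_lt]
  refine ⟨?_, ?_, ?_, ?_⟩ <;>
    simp (disch := fun_prop) [schouten, Fin.sum_univ_four, P43, pd_mul, pd_exp]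

lemma schouten_P43'_of_lt (x : Fin 4 → ℝ) :
    ∀ l μ ν, l < μ → μ < ν → schouten (P43' p14 p23 p12' a23 a24 a33 a53) l μ ν x = 0 := by
  rw [Fin.forall_fin_four_lt_lt]
  refine ⟨?_, ?_, ?_, ?_⟩ <;>
    simp (disch := fun_prop) [schouten, Fin.sum_univ_four, P43', pd_add, pd_mul, pd_exp]
  ring

lemma schoutenMixed_P43_P43'_of_lt (h14 : p14 ≠ 0) (x : Fin 4 → ℝ) :
    ∀ l μ ν, l < μ → μ < ν →
      schoutenMixed (P43 p12 p14 p23) (P43' p14 p23 p12' a23 a24 a33 a53) l μ ν x = 0 := by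
  rw [Fin.forall_fin_four_lt_lt]
  refine ⟨?_, ?_, ?_, ?_⟩ <;>
    simp (disch := fun_prop) [schoutenMixed, Fin.sum_univ_four, P43, P43', pd_add, pd_mul,
      pd_exp]
  field_simp
  ring

end A43

theorem A43_compatible (p12 p14 p23 p12' a23 a24 a33 a53 : ℝ) (h14 : p14 ≠ 0) :
    (∀ x l μ ν, schouten (P43 p12 p14 p23) l μ ν x = 0) ∧
    (∀ x l μ ν, schouten (P43' p14 p23 p12' a23 a24 a33 a53) l μ ν x = 0) ∧
    (∀ x l μ ν, schoutenMixed (P43 p12 p14 p23)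
        (P43' p14 p23 p12' a23 a24 a33 a53) l μ ν x = 0) :=
  ⟨fun x => schouten_eq_zero_of_lt P43_skew (schouten_P43_of_lt x),
    fun x => schouten_eq_zero_of_lt P43'_skew (schouten_P43'_of_lt x),
    fun x => schoutenMixed_eq_zero_of_lt P43_skew P43'_skew (schoutenMixed_P43_P43'_of_lt h14 x)⟩
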